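/- arXiv:1511.09332 — 3 statements merged into one kernel-verified Lean document; each statement's English description precedes it below -/
import Mathlib

section
/- Let κ be an ordinal, C a category, and F : κ+1 ⥤ C a sequential functor. If a morphism f : X ⟶ Y of C has the right lifting property with respect to the morphism F(k ⟶ k+1) for every k < κ, then f has the right lifting property with respect to F(0 ⟶ k) for every k ≤ κ. -/
/-!
STATEMENT 2: Let `κ` be an ordinal, `C` a category and `F : κ+1 ⥤ C` a sequential functor
(the ordinal `κ+1` is realised as the preorder category of ordinals `≤ κ`; sequential means
that at every limit ordinal `α ≤ κ` the cocone of the maps `F(β ⟶ α)`, `β < α`, is colimiting).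
If a morphism `f` has the right lifting property with respect to `F(k ⟶ k+1)` for every
`k < κ`, then it has the right lifting property with respect to `F(0 ⟶ k)` for every `k ≤ κ`.
-/

universe v u' u

open CategoryTheory CategoryTheory.Limits

/-- The inclusion of the ordinals `< α` into the ordinals `≤ κ`, as a functor of
preorder categories. -/
def iicIncl {κ α : Ordinal.{u}} (hα : α ≤ κ) : ↥(Set.Iio α) ⥤ ↥(Set.Iic κ) :=
  Monotone.functor
    (f := fun β => (⟨β.1, Set.mem_Iic.mpr ((Set.mem_Iio.mp β.2).le.trans hα)⟩ : ↥(Set.Iic κ)))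
    (fun _ _ h => h)

/-- The cocone on the restriction of `F : κ+1 ⥤ C` to the ordinals `< α`, whose point is
`F α` and whose legs are the maps `F (β ⟶ α)`. -/
def iicCocone {C : Type u'} [Category.{v} C] {κ : Ordinal.{u}} (F : ↥(Set.Iic κ) ⥤ C)
    {α : Ordinal.{u}} (hα : α ≤ κ) : Cocone (iicIncl hα ⋙ F) where
  pt := F.obj ⟨α, Set.mem_Iic.mpr hα⟩
  ι :=
    { app := fun β =>
        F.map (homOfLE (Subtype.mk_le_mk.mpr (Set.mem_Iio.mp β.2).le))
      naturality := fun β γ g => by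
        dsimp
        rw [Category.comp_id, ← F.map_comp]
        congr 1 }

/-- A functor `F : κ+1 ⥤ C` is sequential if for every limit ordinal `α ≤ κ` the cocone
formed by the morphisms `F (β ⟶ α)`, `β < α`, exhibits `F α` as the colimit of the
restriction of `F` to the ordinals `< α`. -/
def IsSequential {C : Type u'} [Category.{v} C] {κ : Ordinal.{u}}
    (F : ↥(Set.Iic κ) ⥤ C) : Prop :=
  ∀ (α : Ordinal.{u}) (hα : α ≤ κ), Order.IsSuccLimit α → Nonempty (IsColimit (iicCocone F hα))

/-! The sequentiality of `F` is well-order continuity on the well-ordered set `κ + 1`, and `κ + 1`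
has a top element, so each `F (i ⟶ j)` is a transfinite composition of the steps `F (k ⟶ k + 1)`.
Having the left lifting property against `f` is stable under transfinite composition: lifts are
built by transfinite induction, glued through the colimit property at limit stages. -/

section

variable {C : Type u'} [Category.{v} C]

lemma hasLiftingProperty_map_of_forall_succ {J : Type*} [LinearOrder J] [SuccOrder J]
    [OrderBot J] [OrderTop J] [WellFoundedLT J] (F : J ⥤ C) [F.IsWellOrderContinuous]
    {X Y : C} (p : X ⟶ Y)
    (hF : ∀ j : J, ¬IsMax j → HasLiftingProperty (F.map (homOfLE (Order.le_succ j))) p)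
    {i j : J} (φ : i ⟶ j) : HasLiftingProperty (F.map φ) p := by
  let W := (MorphismProperty.ofHoms fun _ : Unit ↦ p).llp
  let h : W.TransfiniteCompositionOfShape J (F.map (homOfLE bot_le : ⊥ ⟶ ⊤)) :=
    { F := F
      isoBot := Iso.refl _
      incl := (coconeOfDiagramTerminal isTerminalTop F).ι
      isColimit := colimitOfDiagramTerminal isTerminalTop F
      map_mem := fun j hj ↦
        (MorphismProperty.llp_ofHoms_iff_hasLiftingProperty Unit _ _).2 (hF j hj) }
  exact (MorphismProperty.llp_ofHoms_iff_hasLiftingProperty Unit _ _).1 (h.mem_map φ)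

lemma IsSequential.isWellOrderContinuous {κ : Ordinal.{u}} {F : ↥(Set.Iic κ) ⥤ C}
    (hF : IsSequential F) : F.IsWellOrderContinuous where
  nonempty_isColimit m hm := by
    obtain ⟨hc⟩ := hF m.1 m.2 ((Set.initialSegIic κ).map_isSuccLimit hm)
    let e : Set.Iio m ≃o Set.Iio m.1 :=
      { toFun := fun β ↦ ⟨β.1.1, β.2⟩
        invFun := fun β ↦ ⟨⟨β.1, (Set.mem_Iio.mp β.2).le.trans m.2⟩, β.2⟩
        left_inv := fun _ ↦ rfl
        right_inv := fun _ ↦ rfl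
        map_rel_iff' := Iff.rfl }
    exact ⟨hc.whiskerEquivalence e.equivalence⟩

end

theorem rlp_of_rlp_succ_steps {C : Type u'} [Category.{v} C] (κ : Ordinal.{u})
    (F : ↥(Set.Iic κ) ⥤ C) (hF : IsSequential F) {X Y : C} (f : X ⟶ Y)
    (hstep : ∀ (k : Ordinal.{u}) (hk : k < κ),
      HasLiftingProperty
        (F.map (homOfLE
          (Subtype.mk_le_mk.mpr (Order.le_succ k) :
            (⟨k, Set.mem_Iic.mpr hk.le⟩ : ↥(Set.Iic κ)) ≤
              ⟨Order.succ k, Set.mem_Iic.mpr (Order.succ_le_of_lt hk)⟩))) f) :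
    ∀ (k : Ordinal.{u}) (hk : k ≤ κ),
      HasLiftingProperty
        (F.map (homOfLE
          (Subtype.mk_le_mk.mpr (zero_le ..) :
            (⟨0, Set.mem_Iic.mpr (zero_le ..)⟩ : ↥(Set.Iic κ)) ≤
              ⟨k, Set.mem_Iic.mpr hk⟩))) f := by
  intro k hk
  have := hF.isWellOrderContinuous
  refine hasLiftingProperty_map_of_forall_succ F f (fun j hj ↦ ?_) _
  have hsucc : (Order.succ j).1 = Order.succ j.1 := Set.Iic.coe_succ_of_not_isMax hj
  have hjκ : j.1 < κ := Order.succ_le_iff.mp (hsucc ▸ (Order.succ j).2)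
  convert hstep j.1 hjκ using 3
  -- the two `Preorder` instances on `Set.Iic κ` used by `homOfLE` agree definitionally
  rfl
end

section
/- Let D be a small category and K a finite set of cones in D, each of whose shape categories A_c is finite. Then the sequences of functors E_i, B_i and natural surjections p_i : B_i ⨿ E_i ⟶ B_{i+1} presenting the reflector of any X : D ⥤ Type into the models of (D, K) as the colimit of the chain with objects B_i(X) ⨿ E_i(X) can be chosen so that B_0(X) = X, E_0(X) is initial, and for every i ∈ ℕ, writing S_i = B_i(X) ⨿ E_i(X), the functor E_{i+1}(X) : D ⥤ Type is the left Kan extension along the functor ou : K ⥤ D (K regarded as a discrete category, sending c to ou_c) of the functor K ⥤ Type sending c to lim (S_i ∘ in_c); concretely, E_{i+1}(X)(d) ≅ Σ_{c ∈ K} Hom_D(ou_c, d) × lim (S_i ∘ in_c), naturally in d ∈ D. -/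
universe u

open CategoryTheory CategoryTheory.Limits

/-- A cone in a small category `D`: a small shape category `A`, a diagram `in_c : A ⥤ D`,
a peak object `ou_c` of `D` and a natural transformation `ρ_c : Δ(ou_c) ⟹ in_c`. -/
structure SketchCone (D : Type u) [SmallCategory D] : Type (u + 1) where
  /-- the shape category of the cone -/
  A : Type u
  /-- the category instance on the shape -/
  [instA : SmallCategory A]
  /-- the diagram of the cone -/
  diag : A ⥤ D
  /-- the peak of the cone -/
  pt : D
  /-- the cone natural transformation -/
  ρ : (Functor.const A).obj pt ⟶ diag

attribute [instance] SketchCone.instA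

variable {D : Type u} [SmallCategory D]

/-- The canonical comparison map `X(ou_c) ⟶ lim (X ∘ in_c)` induced by the maps
`X(ρ_c(a))`, `a ∈ A_c`. -/
noncomputable def canonicalMap (c : SketchCone D) (X : D ⥤ Type u) :
    X.obj c.pt ⟶ limit (c.diag ⋙ X) :=
  limit.lift (c.diag ⋙ X)
    { pt := X.obj c.pt
      π := (Functor.constComp c.A c.pt X).inv ≫ Functor.whiskerRight c.ρ X }

/-- A functor `X : D ⥤ Type` is a model of `(D, K)` (with `K` a family of cones) if for
every cone `c` of the family the canonical comparison map is a bijection. -/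
def IsModelF {ι : Type u} (K : ι → SketchCone D) (X : D ⥤ Type u) : Prop :=
  ∀ i : ι, Function.Bijective (canonicalMap (K i) X)

/-- The left Kan extension along `ou : K ⥤ D` (with `K` discrete) of the functor
`c ↦ lim (S ∘ in_c)`, computed by the coproduct formula
`d ↦ Σ_{c ∈ K} Hom_D(ou_c, d) × lim (S ∘ in_c)`. -/
noncomputable def kanObj {ι : Type u} (K : ι → SketchCone D) (S : D ⥤ Type u) :
    D ⥤ Type u where
  obj d := Σ i : ι, ((K i).pt ⟶ d) × limit ((K i).diag ⋙ S)
  map f := TypeCat.ofHom fun x => ⟨x.1, (x.2.1 ≫ f, x.2.2)⟩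
  map_id d := by ext x : 3; simp
  map_comp f g := by ext x : 3; simp

/-!
STATEMENT 9: Let `D` be a small category and `K` a finite set of cones, each with finite
shape.  The sequences of functors `E_i`, `B_i` and natural surjections
`p_i : B_i ⨿ E_i ⟶ B_{i+1}` presenting the reflector of any `X : D ⥤ Type` into the models
of `(D, K)` can be chosen so that `B_0(X) = X`, `E_0(X)` is initial, and, writing
`S_i = B_i(X) ⨿ E_i(X)`, the functor `E_{i+1}(X)` is the left Kan extension along
`ou : K ⥤ D` of `c ↦ lim (S_i ∘ in_c)`, i.e. concretely
`E_{i+1}(X)(d) ≅ Σ_{c ∈ K} Hom_D(ou_c, d) × lim (S_i ∘ in_c)` naturally in `d`. -/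

/-!
Put `B₀ = X`, `E₀ = ∅`, and, writing `Sₙ = Bₙ ⨿ Eₙ`, let `Eₙ₊₁` be the Kan extension
`d ↦ Σ_c Hom(ou_c, d) × lim (Sₙ ∘ in_c)`: a free cone point over every cone in `Sₙ`. The
functor `Bₙ₊₁` is the quotient of `Sₙ` which identifies two elements of a peak having the same
legs (`ConeKernelRel`), and the leg at `a` of a free point `⟨c, ρ_a ≫ g, l⟩` with `g · π_a l`
(`Stage.fillRel`). In the colimit `C` of the chain `Sₙ ⟶ Bₙ₊₁ ⟶ Sₙ₊₁` the first
identification makes the canonical maps injective and the free points make them surjective;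
finiteness of the shapes lets finitely many elements and equations of `C` live at one stage.
A map `X ⟶ M` into a model extends stage by stage, a free point going to the element of `M`
with the prescribed legs, and the extension is unique since an element of a peak of a model is
determined by its legs.
-/

open CategoryTheory Limits

lemma π_canonicalMap_apply (c : SketchCone D) (X : D ⥤ Type u) (a : c.A) (x : X.obj c.pt) :
    limit.π (c.diag ⋙ X) a (canonicalMap c X x) = X.map (c.ρ.app a) x := by
  simp [canonicalMap, Functor.constComp]

lemma canonicalMap_naturality_apply (c : SketchCone D) {X Y : D ⥤ Type u} (φ : X ⟶ Y)
    (x : X.obj c.pt) :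
    canonicalMap c Y (φ.app c.pt x) =
      limMap (Functor.whiskerLeft c.diag φ) (canonicalMap c X x) := by
  apply Types.limit_ext
  intro a
  rw [limMap_π_apply, π_canonicalMap_apply, π_canonicalMap_apply]
  exact (NatTrans.naturality_apply φ _ x).symm

namespace FunctorToTypes

variable {C : Type*} [Category C] (F : C ⥤ Type u) (r : ∀ c, F.obj c → F.obj c → Prop)
  (hr : ∀ {c c'} (f : c ⟶ c') {x y}, r c x y → r c' (F.map f x) (F.map f y))

def quot : C ⥤ Type u where
  obj c := Quot (r c)
  map f := TypeCat.ofHom (Quot.map (F.map f) fun _ _ => hr f)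
  map_id c := by
    ext x; induction x using Quot.ind; exact congr_arg _ (Functor.map_id_apply F _ _)
  map_comp f g := by
    ext x; induction x using Quot.ind; exact congr_arg _ (Functor.map_comp_apply F f g _)

def quotπ : F ⟶ quot F r hr where
  app c := TypeCat.ofHom (Quot.mk (r c))

lemma quotπ_app_surjective (c : C) : Function.Surjective ((quotπ F r hr).app c) :=
  Quot.mk_surjective

variable {F r hr} {G : C ⥤ Type u}

lemma quotπ_app_eq {c : C} {x y : F.obj c} (h : r c x y) :
    (quotπ F r hr).app c x = (quotπ F r hr).app c y :=
  Quot.sound h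

def quotLift (φ : F ⟶ G) (hφ : ∀ c x y, r c x y → φ.app c x = φ.app c y) :
    quot F r hr ⟶ G where
  app c := TypeCat.ofHom (Quot.lift (φ.app c) (hφ c))
  naturality c c' f := by
    ext x; induction x using Quot.ind; exact NatTrans.naturality_apply φ f _

@[simp]
lemma quotπ_quotLift (φ : F ⟶ G) (hφ : ∀ c x y, r c x y → φ.app c x = φ.app c y) :
    quotπ F r hr ≫ quotLift φ hφ = φ := rfl

lemma quot_hom_ext {α β : quot F r hr ⟶ G} (h : quotπ F r hr ≫ α = quotπ F r hr ≫ β) :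
    α = β := by
  ext c x
  induction x using Quot.ind with
  | mk x => exact types_congr_hom (congr_app h c) x

end FunctorToTypes

namespace FunctorToTypes

variable {A C : Type*} [Category A] [Category C] (S : A ⥤ C ⥤ Type u)
  (r : ∀ X c, (S.obj X).obj c → (S.obj X).obj c → Prop)
  (hmap : ∀ X {c c'} (f : c ⟶ c') {x y}, r X c x y →
    r X c' ((S.obj X).map f x) ((S.obj X).map f y))
  (hnat : ∀ {X Y} (f : X ⟶ Y) c {x y}, r X c x y →
    r Y c ((S.map f).app c x) ((S.map f).app c y))

abbrev quotFunctor : A ⥤ C ⥤ Type u where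
  obj X := quot (S.obj X) (r X) (hmap X)
  map f := quotLift (S.map f ≫ quotπ _ _ _) fun c _ _ h => quotπ_app_eq (hnat f c h)
  map_id X := quot_hom_ext (by simp)
  map_comp f g := quot_hom_ext (by
    ext c x
    exact congr_arg (Quot.mk _) (types_congr_hom (congr_app (S.map_comp f g) c) x))

def quotFunctorπ : S ⟶ quotFunctor S r hmap hnat where
  app X := quotπ (S.obj X) (r X) (hmap X)

end FunctorToTypes

section Kan

variable {ι : Type u} (K : ι → SketchCone D)

def kanObjMk {S : D ⥤ Type u} {d : D} (i : ι) (t : (K i).pt ⟶ d)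
    (l : limit ((K i).diag ⋙ S)) : (kanObj K S).obj d :=
  ⟨i, (t, l)⟩

lemma kanObj_eq_mk {S : D ⥤ Type u} {d : D} (x : (kanObj K S).obj d) :
    x = kanObjMk K x.1 x.2.1 x.2.2 :=
  rfl

@[simp]
lemma kanObj_map_mk {S : D ⥤ Type u} {d d' : D} (f : d ⟶ d') (i : ι) (t : (K i).pt ⟶ d)
    (l : limit ((K i).diag ⋙ S)) :
    (kanObj K S).map f (kanObjMk K i t l) = kanObjMk K i (t ≫ f) l :=
  rfl

noncomputable def kanFunctor : (D ⥤ Type u) ⥤ D ⥤ Type u where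
  obj S := kanObj K S
  map φ :=
    { app d := TypeCat.ofHom fun x =>
        kanObjMk K x.1 x.2.1 (lim.map (Functor.whiskerLeft (K x.1).diag φ) x.2.2) }
  map_id S := by
    ext d ⟨i, t, l⟩
    simp only [Functor.whiskerLeft_id', lim.map_id]
    rfl
  map_comp φ ψ := by
    ext d ⟨i, t, l⟩
    simp only [Functor.whiskerLeft_comp, lim.map_comp]
    rfl

lemma kanObj_hom_ext {S G : D ⥤ Type u} {α β : kanObj K S ⟶ G}
    (h : ∀ i l, α.app (K i).pt (kanObjMk K i (𝟙 _) l) = β.app (K i).pt (kanObjMk K i (𝟙 _) l)) :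
    α = β := by
  refine NatTrans.ext (funext fun d => ConcreteCategory.hom_ext _ _ fun x => ?_)
  rw [kanObj_eq_mk K x, ← Category.id_comp x.2.1, ← kanObj_map_mk, NatTrans.naturality_apply,
    NatTrans.naturality_apply, h]

variable {K} {M : D ⥤ Type u}

noncomputable def kanObjDesc (hM : IsModelF K M) {S : D ⥤ Type u} (φ : S ⟶ M) :
    kanObj K S ⟶ M where
  app d := TypeCat.ofHom fun x => M.map x.2.1
    ((Equiv.ofBijective _ (hM x.1)).symm (limMap (Functor.whiskerLeft (K x.1).diag φ) x.2.2))
  naturality _ _ f := by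
    ext x
    exact Functor.map_comp_apply M _ f _

lemma kanObjDesc_app_mk_ρ (hM : IsModelF K M) {S : D ⥤ Type u} (φ : S ⟶ M) {d : D} (i : ι)
    (a : (K i).A) (g : (K i).diag.obj a ⟶ d) (l : limit ((K i).diag ⋙ S)) :
    (kanObjDesc hM φ).app d (kanObjMk K i ((K i).ρ.app a ≫ g) l) =
      M.map g (φ.app _ (limit.π ((K i).diag ⋙ S) a l)) := by
  change M.map ((K i).ρ.app a ≫ g)
    ((Equiv.ofBijective _ (hM i)).symm (limMap (Functor.whiskerLeft (K i).diag φ) l)) = _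
  rw [Functor.map_comp_apply, ← π_canonicalMap_apply,
    Equiv.ofBijective_apply_symm_apply (canonicalMap (K i) M) (hM i), limMap_π_apply]
  rfl

end Kan

noncomputable abbrev pointwiseCoprod {C E : Type*} [Category C] [Category E] [HasBinaryCoproducts E]
    (F G : C ⥤ E) : C ⥤ E where
  obj X := F.obj X ⨿ G.obj X
  map f := coprod.map (F.map f) (G.map f)

section ConeKernel

variable {ι : Type u} (K : ι → SketchCone D)

def ConeKernelRel (S : D ⥤ Type u) (d : D) (x y : S.obj d) : Prop :=
  ∃ (i : ι) (g : (K i).pt ⟶ d) (x' y' : S.obj (K i).pt),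
    canonicalMap (K i) S x' = canonicalMap (K i) S y' ∧ S.map g x' = x ∧ S.map g y' = y

variable {K}

lemma ConeKernelRel.map {S : D ⥤ Type u} {d d' : D} (f : d ⟶ d') {x y : S.obj d}
    (h : ConeKernelRel K S d x y) : ConeKernelRel K S d' (S.map f x) (S.map f y) := by
  obtain ⟨i, g, x', y', hc, rfl, rfl⟩ := h
  exact ⟨i, g ≫ f, x', y', hc, by simp, by simp⟩

lemma ConeKernelRel.app {S T : D ⥤ Type u} (φ : S ⟶ T) {d : D} {x y : S.obj d}
    (h : ConeKernelRel K S d x y) : ConeKernelRel K T d (φ.app d x) (φ.app d y) := by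
  obtain ⟨i, g, x', y', hc, rfl, rfl⟩ := h
  refine ⟨i, g, φ.app _ x', φ.app _ y', ?_, (NatTrans.naturality_apply φ g x').symm,
    (NatTrans.naturality_apply φ g y').symm⟩
  rw [canonicalMap_naturality_apply, canonicalMap_naturality_apply, hc]

lemma ConeKernelRel.eq {M : D ⥤ Type u} (hM : IsModelF K M) {d : D} {x y : M.obj d}
    (h : ConeKernelRel K M d x y) : x = y := by
  obtain ⟨i, g, x', y', hc, rfl, rfl⟩ := h
  rw [(hM i).1 hc]

end ConeKernel

section Stages

variable {ι : Type u} (K : ι → SketchCone D)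

variable (D) in
/-- A stage `(B, E)` of the presentation, together with the identifications `R` on `B ⨿ E`
that are still to be imposed when passing to the next `B`. -/
structure Stage : Type (u + 1) where
  B : (D ⥤ Type u) ⥤ D ⥤ Type u
  E : (D ⥤ Type u) ⥤ D ⥤ Type u
  R : ∀ X d, ((pointwiseCoprod B E).obj X).obj d → ((pointwiseCoprod B E).obj X).obj d → Prop
  R_map : ∀ X {d d'} (f : d ⟶ d') {x y}, R X d x y →
    R X d' (((pointwiseCoprod B E).obj X).map f x) (((pointwiseCoprod B E).obj X).map f y)
  R_natural : ∀ {X Y} (f : X ⟶ Y) d {x y}, R X d x y →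
    R Y d (((pointwiseCoprod B E).map f).app d x) (((pointwiseCoprod B E).map f).app d y)

namespace Stage

variable (s : Stage D)

noncomputable abbrev S : (D ⥤ Type u) ⥤ D ⥤ Type u := pointwiseCoprod s.B s.E

def rel (X : D ⥤ Type u) (d : D) (x y : (s.S.obj X).obj d) : Prop :=
  s.R X d x y ∨ ConeKernelRel K (s.S.obj X) d x y

lemma rel_map (X : D ⥤ Type u) {d d' : D} (f : d ⟶ d') {x y : (s.S.obj X).obj d}
    (h : s.rel K X d x y) : s.rel K X d' ((s.S.obj X).map f x) ((s.S.obj X).map f y) :=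
  h.imp (s.R_map X f) (ConeKernelRel.map f)

lemma rel_natural {X Y : D ⥤ Type u} (f : X ⟶ Y) (d : D) {x y : (s.S.obj X).obj d}
    (h : s.rel K X d x y) : s.rel K Y d ((s.S.map f).app d x) ((s.S.map f).app d y) :=
  h.imp (s.R_natural f d) (ConeKernelRel.app (s.S.map f))

noncomputable abbrev nextB : (D ⥤ Type u) ⥤ D ⥤ Type u :=
  FunctorToTypes.quotFunctor s.S (s.rel K) (s.rel_map K) (s.rel_natural K)

noncomputable def proj : s.S ⟶ s.nextB K :=
  FunctorToTypes.quotFunctorπ s.S (s.rel K) (s.rel_map K) (s.rel_natural K)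

lemma proj_app_eq {X : D ⥤ Type u} {d : D} {x y : (s.S.obj X).obj d} (h : s.rel K X d x y) :
    ((s.proj K).app X).app d x = ((s.proj K).app X).app d y :=
  FunctorToTypes.quotπ_app_eq (hr := s.rel_map K X) h

lemma proj_app_surjective (X : D ⥤ Type u) (d : D) :
    Function.Surjective (((s.proj K).app X).app d) :=
  FunctorToTypes.quotπ_app_surjective _ _ (s.rel_map K X) d

lemma proj_app_hom_ext {X G : D ⥤ Type u} {α β : (s.nextB K).obj X ⟶ G}
    (h : (s.proj K).app X ≫ α = (s.proj K).app X ≫ β) : α = β :=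
  FunctorToTypes.quot_hom_ext (hr := s.rel_map K X) h

noncomputable abbrev nextE : (D ⥤ Type u) ⥤ D ⥤ Type u where
  obj X := kanObj K (s.S.obj X)
  map f := (kanFunctor K).map (s.S.map f)
  map_id X := (congr_arg _ (s.S.map_id X)).trans ((kanFunctor K).map_id _)
  map_comp f g := (congr_arg _ (s.S.map_comp f g)).trans ((kanFunctor K).map_comp _ _)

/-- The identifications making the new cone point over `l` have legs `π_a l`. -/
def fillRel (X : D ⥤ Type u) (d : D)
    (x y : ((pointwiseCoprod (s.nextB K) (s.nextE K)).obj X).obj d) : Prop :=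
  ∃ (i : ι) (a : (K i).A) (l : limit ((K i).diag ⋙ s.S.obj X)) (g : (K i).diag.obj a ⟶ d),
    x = (coprod.inr : _ ⟶ (s.nextB K).obj X ⨿ _).app d
      (kanObjMk K i ((K i).ρ.app a ≫ g) l) ∧
    y = (coprod.inl : _ ⟶ _ ⨿ (s.nextE K).obj X).app d
      (((s.proj K).app X).app d ((s.S.obj X).map g (limit.π ((K i).diag ⋙ s.S.obj X) a l)))

noncomputable abbrev next : Stage D where
  B := s.nextB K
  E := s.nextE K
  R := s.fillRel K
  R_map X d d' f := by
    rintro _ _ ⟨i, a, l, g, rfl, rfl⟩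
    refine ⟨i, a, l, g ≫ f, ?_, ?_⟩
    · refine (NatTrans.naturality_apply (coprod.inr : (s.nextE K).obj X ⟶ _) f _).symm.trans ?_
      exact congr_arg ((coprod.inr : (s.nextE K).obj X ⟶ _).app d')
        (congr_arg (kanObjMk K i · l) (Category.assoc _ _ _))
    · refine (NatTrans.naturality_apply (coprod.inl : (s.nextB K).obj X ⟶ _) f _).symm.trans ?_
      refine congr_arg _ ((NatTrans.naturality_apply ((s.proj K).app X) f _).symm.trans ?_)
      rw [Functor.map_comp_apply]
  R_natural {X Y} f d := by
    rintro _ _ ⟨i, a, l, g, rfl, rfl⟩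
    refine ⟨i, a, lim.map (Functor.whiskerLeft (K i).diag (s.S.map f)) l, g, ?_, ?_⟩
    · exact types_congr_hom (congr_app (coprod.inr_map ((s.nextB K).map f) ((s.nextE K).map f)) d) _
    · refine (types_congr_hom
        (congr_app (coprod.inl_map ((s.nextB K).map f) ((s.nextE K).map f)) d) _).trans
        (congr_arg ((coprod.inl : (s.nextB K).obj Y ⟶ _).app d) ?_)
      show ((s.proj K).app Y).app d ((s.S.map f).app d _) = _
      rw [NatTrans.naturality_apply, ← limMap_eq, limMap_π_apply]
      rfl

variable {K} {X M : D ⥤ Type u} (hM : IsModelF K M) (g : s.S.obj X ⟶ M)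
  (hg : ∀ d x y, s.R X d x y → g.app d x = g.app d y)

noncomputable def nextDesc : (s.next K).S.obj X ⟶ M :=
  coprod.desc
    (FunctorToTypes.quotLift (hr := s.rel_map K X) g fun d x y h =>
      h.elim (hg d x y) fun h => (h.app g).eq hM)
    (kanObjDesc hM g)

lemma proj_inl_nextDesc : (s.proj K).app X ≫ coprod.inl ≫ s.nextDesc hM g hg = g := by
  rw [nextDesc, coprod.inl_desc]
  rfl

lemma nextDesc_app_eq (d : D) (x y) (h : (s.next K).R X d x y) :
    (s.nextDesc hM g hg).app d x = (s.nextDesc hM g hg).app d y := by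
  obtain ⟨i, a, l, g', rfl, rfl⟩ := h
  rw [← NatTrans.comp_app_apply, ← NatTrans.comp_app_apply, nextDesc, coprod.inr_desc,
    coprod.inl_desc, kanObjDesc_app_mk_ρ]
  exact (NatTrans.naturality_apply g g' _).symm

end Stage

noncomputable def Stage.zero : Stage D where
  B := 𝟭 _
  E := (Functor.const _).obj (⊥_ _)
  R _ _ _ _ := False
  R_map _ _ _ _ _ := id
  R_natural _ _ _ _ := id

-- `stages`, `Stage.next`, `Stage.nextB` and `Stage.nextE` are reducible so that
-- `(stages K (n + 1)).E.obj X` is reducibly `kanObj K ((stages K n).S.obj X)`, as rewriting needs.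
noncomputable abbrev stages : ℕ → Stage D
  | 0 => Stage.zero
  | n + 1 => (stages n).next K

end Stages

section SequentialColimit

variable {C : Type*} [Category C] (F : ℕ ⥤ C ⥤ Type u)

lemma map_homOfLE_trans_apply {n m k : ℕ} (hnm : n ≤ m) (hmk : m ≤ k) (c : C)
    (x : (F.obj n).obj c) :
    (F.map (homOfLE hmk)).app c ((F.map (homOfLE hnm)).app c x) =
      (F.map (homOfLE (hnm.trans hmk))).app c x := by
  rw [← types_comp_apply ((F.map _).app c) ((F.map _).app c), ← NatTrans.comp_app,
    ← F.map_comp, homOfLE_comp]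

lemma colimit_ι_map_homOfLE_apply {n m : ℕ} (h : n ≤ m) (c : C) (x : (F.obj n).obj c) :
    (colimit.ι F m).app c ((F.map (homOfLE h)).app c x) = (colimit.ι F n).app c x :=
  types_congr_hom (congr_app (colimit.w F (homOfLE h)) c) x

lemma exists_colimit_ι_app_eq (c : C) (x : (colimit F).obj c) :
    ∃ n y, (colimit.ι F n).app c y = x :=
  Types.jointly_surjective_of_isColimit
    (isColimitOfPreserves ((evaluation C (Type u)).obj c) (colimit.isColimit F)) x

lemma exists_colimit_ι_app_eq₂ (c : C) (x y : (colimit F).obj c) :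
    ∃ n x' y', (colimit.ι F n).app c x' = x ∧ (colimit.ι F n).app c y' = y :=
  Types.FilteredColimit.jointly_surjective_of_isColimit₂
    (isColimitOfPreserves ((evaluation C (Type u)).obj c) (colimit.isColimit F)) x y

lemma exists_map_eq_of_colimit_ι_app_eq {c : C} {n : ℕ} {x y : (F.obj n).obj c}
    (h : (colimit.ι F n).app c x = (colimit.ι F n).app c y) :
    ∃ m, ∃ hnm : n ≤ m, (F.map (homOfLE hnm)).app c x = (F.map (homOfLE hnm)).app c y := by
  obtain ⟨m, f, hf⟩ := (Types.FilteredColimit.isColimit_eq_iff' (isColimitOfPreserves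
    ((evaluation C (Type u)).obj c) (colimit.isColimit F)) x y).1 h
  exact ⟨m, leOfHom f, hf⟩

lemma exists_colimit_ι_app_eq_of_finite {α : Type*} [Finite α] (c : α → C)
    (x : ∀ a, (colimit F).obj (c a)) :
    ∃ n, ∃ y : ∀ a, (F.obj n).obj (c a), ∀ a, (colimit.ι F n).app (c a) (y a) = x a := by
  choose n y hy using fun a => exists_colimit_ι_app_eq F (c a) (x a)
  obtain ⟨N, hN⟩ := (Set.finite_range n).bddAbove
  exact ⟨N, fun a => (F.map (homOfLE (hN ⟨a, rfl⟩))).app _ (y a),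
    fun a => (colimit_ι_map_homOfLE_apply F _ _ _).trans (hy a)⟩

lemma exists_map_eq_of_colimit_ι_app_eq_of_finite {α : Type*} [Finite α] (c : α → C) {n : ℕ}
    (x y : ∀ a, (F.obj n).obj (c a))
    (h : ∀ a, (colimit.ι F n).app (c a) (x a) = (colimit.ι F n).app (c a) (y a)) :
    ∃ m, ∃ hnm : n ≤ m, ∀ a,
      (F.map (homOfLE hnm)).app (c a) (x a) = (F.map (homOfLE hnm)).app (c a) (y a) := by
  choose m hnm hm using fun a => exists_map_eq_of_colimit_ι_app_eq F (h a)
  obtain ⟨N, hN⟩ := (Set.finite_range m).bddAbove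
  refine ⟨max n N, le_max_left _ _, fun a => ?_⟩
  have hk : m a ≤ max n N := (hN ⟨a, rfl⟩).trans (le_max_right _ _)
  rw [← map_homOfLE_trans_apply F (hnm a) hk, ← map_homOfLE_trans_apply F (hnm a) hk, hm a]

end SequentialColimit

section ModelColimit

lemma finite_of_finite_arrows (A : Type*) [Category A] [Finite (Σ (a : A) (b : A), a ⟶ b)] :
    Finite A :=
  .of_injective (fun a => (⟨a, a, 𝟙 a⟩ : Σ (a : A) (b : A), a ⟶ b)) fun _ _ h =>
    congr_arg Sigma.fst h

variable (F : ℕ ⥤ D ⥤ Type u) (c : SketchCone D)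

lemma canonicalMap_colimit_injective [Finite c.A]
    (hinj : ∀ n x y, canonicalMap c (F.obj n) x = canonicalMap c (F.obj n) y →
      ∃ m, ∃ h : n ≤ m, (F.map (homOfLE h)).app c.pt x = (F.map (homOfLE h)).app c.pt y) :
    Function.Injective (canonicalMap c (colimit F)) := by
  intro x y hxy
  obtain ⟨n, x, y, rfl, rfl⟩ := exists_colimit_ι_app_eq₂ F c.pt x y
  have hι (a : c.A) :
      (colimit.ι F n).app _ (limit.π (c.diag ⋙ F.obj n) a (canonicalMap c (F.obj n) x)) =
        (colimit.ι F n).app _ (limit.π (c.diag ⋙ F.obj n) a (canonicalMap c (F.obj n) y)) := by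
    simpa [canonicalMap_naturality_apply] using congr_arg (limit.π (c.diag ⋙ colimit F) a) hxy
  obtain ⟨m, hnm, hm⟩ := exists_map_eq_of_colimit_ι_app_eq_of_finite F c.diag.obj _ _ hι
  obtain ⟨k, hmk, hk⟩ := hinj m ((F.map (homOfLE hnm)).app _ x) ((F.map (homOfLE hnm)).app _ y)
    (by
      simp only [canonicalMap_naturality_apply]
      exact Types.limit_ext _ _ _ fun a => by simpa using hm a)
  rw [← colimit_ι_map_homOfLE_apply F (hnm.trans hmk), ← map_homOfLE_trans_apply F hnm hmk, hk,
    map_homOfLE_trans_apply, colimit_ι_map_homOfLE_apply]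

lemma canonicalMap_colimit_surjective [Finite (Σ (a : c.A) (b : c.A), a ⟶ b)]
    (hsurj : ∀ n (l : limit (c.diag ⋙ F.obj n)), ∃ m, ∃ h : n ≤ m, ∃ x,
      canonicalMap c (F.obj m) x = limMap (Functor.whiskerLeft c.diag (F.map (homOfLE h))) l) :
    Function.Surjective (canonicalMap c (colimit F)) := by
  intro w
  have := finite_of_finite_arrows c.A
  obtain ⟨n, y, hy⟩ := exists_colimit_ι_app_eq_of_finite F c.diag.obj
    fun a => limit.π (c.diag ⋙ colimit F) a w
  obtain ⟨m, hnm, hm⟩ := exists_map_eq_of_colimit_ι_app_eq_of_finite F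
    (fun t : Σ (a : c.A) (b : c.A), a ⟶ b => c.diag.obj t.2.1)
    (fun t => (F.obj n).map (c.diag.map t.2.2) (y t.1)) (fun t => y t.2.1) (by
      rintro ⟨a, b, φ⟩
      rw [NatTrans.naturality_apply, hy, hy]
      exact limit.w_apply (c.diag ⋙ colimit F) φ w)
  let l := Types.Limit.mk (c.diag ⋙ F.obj m) (fun a => (F.map (homOfLE hnm)).app _ (y a))
    fun a b φ => by
      simpa [← NatTrans.naturality_apply] using hm ⟨a, b, φ⟩
  obtain ⟨k, hmk, x, hx⟩ := hsurj m l
  refine ⟨(colimit.ι F k).app _ x, Types.limit_ext _ _ _ fun a => ?_⟩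
  rw [canonicalMap_naturality_apply, limMap_π_apply, hx, limMap_π_apply]
  simp [l, Types.Limit.π_mk, colimit_ι_map_homOfLE_apply, hy]

end ModelColimit

section Reflection

variable {ι : Type u} (K : ι → SketchCone D) (X : D ⥤ Type u)

noncomputable def stageProj (n : ℕ) :
    (stages K n).B.obj X ⨿ (stages K n).E.obj X ⟶ (stages K (n + 1)).B.obj X :=
  ((stages K n).proj K).app X

lemma stageProj_hom_ext (n : ℕ) {G : D ⥤ Type u} {α β : (stages K (n + 1)).B.obj X ⟶ G}
    (h : stageProj K X n ≫ α = stageProj K X n ≫ β) : α = β :=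
  (stages K n).proj_app_hom_ext K h

noncomputable def chain : ℕ ⥤ D ⥤ Type u :=
  Functor.ofSequence (X := fun n => (stages K n).B.obj X ⨿ (stages K n).E.obj X)
    fun n => stageProj K X n ≫ coprod.inl

lemma chain_map_succ (n : ℕ) :
    (chain K X).map (homOfLE n.le_succ) = stageProj K X n ≫ coprod.inl :=
  Functor.ofSequence_map_homOfLE_succ _ n

lemma chain_map_eq_of_canonicalMap_eq {n : ℕ} (i : ι) {x y : ((chain K X).obj n).obj (K i).pt}
    (h : canonicalMap (K i) _ x = canonicalMap (K i) _ y) :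
    ((chain K X).map (homOfLE n.le_succ)).app _ x =
      ((chain K X).map (homOfLE n.le_succ)).app _ y := by
  rw [chain_map_succ]
  exact congr_arg ((coprod.inl : _ ⟶ _ ⨿ (stages K (n + 1)).E.obj X).app _)
    ((stages K n).proj_app_eq K (Or.inr ⟨i, 𝟙 _, x, y, h,
      Functor.map_id_apply ((stages K n).S.obj X) _ x,
      Functor.map_id_apply ((stages K n).S.obj X) _ y⟩))

-- `fillRel` on `Sₙ₊₁` only takes effect in `Bₙ₊₂`.
lemma chain_map_inr_ρ (n : ℕ) (i : ι) (a : (K i).A)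
    (l : limit ((K i).diag ⋙ (chain K X).obj n)) :
    ((chain K X).map (homOfLE (n + 1).le_succ)).app _
      ((coprod.inr : (stages K (n + 1)).E.obj X ⟶ _).app _
        (kanObjMk K i ((K i).ρ.app a) l)) =
    ((chain K X).map (homOfLE (n.le_succ.trans (n + 1).le_succ))).app _
      (limit.π ((K i).diag ⋙ (chain K X).obj n) a l) := by
  rw [← map_homOfLE_trans_apply _ n.le_succ (n + 1).le_succ, chain_map_succ, chain_map_succ]
  refine congr_arg ((coprod.inl : _ ⟶ _ ⨿ (stages K (n + 2)).E.obj X).app _)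
    ((stages K (n + 1)).proj_app_eq K (Or.inl ⟨i, a, l, 𝟙 _, ?_, ?_⟩))
  · rw [Category.comp_id]
  · rw [Functor.map_id_apply]
    rfl

lemma chain_limMap_canonicalMap_inr (n : ℕ) (i : ι)
    (l : limit ((K i).diag ⋙ (chain K X).obj n)) :
    limMap (Functor.whiskerLeft (K i).diag ((chain K X).map (homOfLE (n + 1).le_succ)))
      (canonicalMap (K i) ((chain K X).obj (n + 1))
        ((coprod.inr : (stages K (n + 1)).E.obj X ⟶ _).app _
          (kanObjMk K i (𝟙 _) l))) =
    limMap (Functor.whiskerLeft (K i).diag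
      ((chain K X).map (homOfLE (n.le_succ.trans (n + 1).le_succ)))) l := by
  refine Types.limit_ext _ _ _ fun a => ?_
  erw [limMap_π_apply, limMap_π_apply, π_canonicalMap_apply, ← NatTrans.naturality_apply]
  have h := chain_map_inr_ρ K X n i a l
  rw [← Category.id_comp ((K i).ρ.app a)] at h
  exact h

theorem isModelF_colimit_chain (hfin : ∀ i, Finite (Σ (a : (K i).A) (b : (K i).A), a ⟶ b)) :
    IsModelF K (colimit (chain K X)) := fun i => by
  have := finite_of_finite_arrows (K i).A
  refine ⟨canonicalMap_colimit_injective _ _ fun n x y h =>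
      ⟨n + 1, n.le_succ, chain_map_eq_of_canonicalMap_eq K X i h⟩,
    canonicalMap_colimit_surjective _ _ fun n l => ⟨n + 2, n.le_succ.trans (n + 1).le_succ,
      ((chain K X).map (homOfLE (n + 1).le_succ)).app _
        ((coprod.inr : (stages K (n + 1)).E.obj X ⟶ _).app _ (kanObjMk K i (𝟙 _) l)), ?_⟩⟩
  erw [canonicalMap_naturality_apply]
  exact chain_limMap_canonicalMap_inr K X n i l

-- `colimit.ι` with source the stage coproduct rather than `(chain K X).obj n`, which is only
-- defeq to it.
noncomputable def chainι (n : ℕ) :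
    (stages K n).B.obj X ⨿ (stages K n).E.obj X ⟶ colimit (chain K X) :=
  colimit.ι (chain K X) n

lemma stageProj_inl_chainι (n : ℕ) :
    stageProj K X n ≫ coprod.inl ≫ chainι K X (n + 1) = chainι K X n := by
  have hw := colimit.w (chain K X) (homOfLE n.le_succ)
  rw [chain_map_succ] at hw
  exact (Category.assoc _ _ _).symm.trans hw

lemma canonicalMap_chainι_inr (n : ℕ) (i : ι)
    (l : limit ((K i).diag ⋙ ((stages K n).B.obj X ⨿ (stages K n).E.obj X))) :
    canonicalMap (K i) (colimit (chain K X))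
        ((chainι K X (n + 1)).app _
          ((coprod.inr : (stages K (n + 1)).E.obj X ⟶ _).app _ (kanObjMk K i (𝟙 _) l))) =
      limMap (Functor.whiskerLeft (K i).diag (chainι K X n)) l := by
  erw [← colimit_ι_map_homOfLE_apply _ (n + 1).le_succ, canonicalMap_naturality_apply,
    canonicalMap_naturality_apply, chain_limMap_canonicalMap_inr]
  refine Types.limit_ext _ _ _ fun a => ?_
  simp only [limMap_π_apply, Functor.whiskerLeft_app]
  erw [limMap_π_apply]
  exact colimit_ι_map_homOfLE_apply (chain K X) _ _ _

lemma colimit_chain_hom_ext {M : D ⥤ Type u} (hM : IsModelF K M)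
    {g g' : colimit (chain K X) ⟶ M}
    (h : (coprod.inl ≫ chainι K X 0) ≫ g = (coprod.inl ≫ chainι K X 0) ≫ g') :
    g = g' := by
  refine colimit.hom_ext fun n => ?_
  change chainι K X n ≫ g = chainι K X n ≫ g'
  induction n with
  | zero => exact coprod.hom_ext (by simpa using h) (initialIsInitial.hom_ext _ _)
  | succ n ih =>
    refine coprod.hom_ext (stageProj_hom_ext K X n ?_) ?_
    · rw [← stageProj_inl_chainι] at ih
      simpa only [Category.assoc] using ih
    · refine kanObj_hom_ext K fun i l => (hM i).1 ?_
      change canonicalMap (K i) M (g.app _ ((chainι K X (n + 1)).app _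
            ((coprod.inr : (stages K (n + 1)).E.obj X ⟶ _).app _ (kanObjMk K i (𝟙 _) l)))) =
          canonicalMap (K i) M (g'.app _ ((chainι K X (n + 1)).app _
            ((coprod.inr : (stages K (n + 1)).E.obj X ⟶ _).app _ (kanObjMk K i (𝟙 _) l))))
      rw [canonicalMap_naturality_apply, canonicalMap_chainι_inr, canonicalMap_naturality_apply,
        canonicalMap_chainι_inr]
      refine Types.limit_ext _ _ _ fun a => ?_
      simp only [limMap_π_apply, Functor.whiskerLeft_app]
      exact types_congr_hom (congr_app ih _) _

variable {K X} {M : D ⥤ Type u} (hM : IsModelF K M) (f : X ⟶ M)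

noncomputable def chainDesc : ∀ n, {g : (stages K n).S.obj X ⟶ M //
    ∀ d x y, (stages K n).R X d x y → g.app d x = g.app d y}
  | 0 => ⟨coprod.desc f (initial.to M), fun _ _ _ => False.elim⟩
  | n + 1 => ⟨(stages K n).nextDesc hM _ (chainDesc n).2, (stages K n).nextDesc_app_eq hM _ _⟩

noncomputable def chainCocone : Cocone (chain K X) where
  pt := M
  ι := NatTrans.ofSequence (fun n => (chainDesc hM f n).1) fun n => by
    rw [chain_map_succ]
    exact (Category.assoc _ _ _).trans
      (((stages K n).proj_inl_nextDesc hM _ (chainDesc hM f n).2).trans (Category.comp_id _).symm)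

lemma inl_chainι_zero_desc_chainCocone :
    (coprod.inl ≫ chainι K X 0) ≫ colimit.desc _ (chainCocone hM f) = f := by
  exact (Category.assoc _ _ _).trans
    ((congr_arg _ (colimit.ι_desc (chainCocone hM f) 0)).trans (coprod.inl_desc _ _))

end Reflection

theorem reflector_presentation_kan
    {ι : Type u} (K : ι → SketchCone D)
    (hfin : ∀ i : ι, Finite (Σ (a : (K i).A) (b : (K i).A), a ⟶ b)) :
    ∃ (B E : ℕ → (D ⥤ Type u) ⥤ (D ⥤ Type u))
      (p : ∀ (n : ℕ) (X : D ⥤ Type u), ((B n).obj X ⨿ (E n).obj X) ⟶ (B (n + 1)).obj X)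
      (hB0 : B 0 = 𝟭 (D ⥤ Type u)),
      (∀ X : D ⥤ Type u, Nonempty (IsInitial ((E 0).obj X))) ∧
      (∀ (n : ℕ) (X Y : D ⥤ Type u) (f : X ⟶ Y),
        coprod.map ((B n).map f) ((E n).map f) ≫ p n Y = p n X ≫ (B (n + 1)).map f) ∧
      (∀ (n : ℕ) (X : D ⥤ Type u) (d : D), Function.Surjective ((p n X).app d)) ∧
      (∀ (n : ℕ) (X : D ⥤ Type u),
        Nonempty ((E (n + 1)).obj X ≅ kanObj K ((B n).obj X ⨿ (E n).obj X))) ∧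
      (∀ X : D ⥤ Type u,
        IsModelF K
          (colimit (Functor.ofSequence
            (X := fun n => (B n).obj X ⨿ (E n).obj X) (fun n => p n X ≫ coprod.inl))) ∧
        ∀ (M : D ⥤ Type u), IsModelF K M → ∀ f : X ⟶ M,
          ∃! g : colimit (Functor.ofSequence
              (X := fun n => (B n).obj X ⨿ (E n).obj X) (fun n => p n X ≫ coprod.inl)) ⟶ M,
            (eqToHom (show X = (B 0).obj X by simp [hB0]) ≫ coprod.inl ≫
              colimit.ι (Functor.ofSequence
                (X := fun n => (B n).obj X ⨿ (E n).obj X) (fun n => p n X ≫ coprod.inl)) 0) ≫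
              g = f) := by
  refine ⟨fun n => (stages K n).B, fun n => (stages K n).E, fun n X => stageProj K X n, rfl,
    fun X => ⟨initialIsInitial⟩, fun n X Y f => ((stages K n).proj K).naturality f,
    fun n X => (stages K n).proj_app_surjective K X, fun n X => ⟨Iso.refl _⟩,
    fun X => ⟨isModelF_colimit_chain K X hfin, fun M hM f => ?_⟩⟩
  exact ⟨_, inl_chainι_zero_desc_chainCocone hM f, fun g hg =>
    colimit_chain_hom_ext K X hM (hg.trans (inl_chainι_zero_desc_chainCocone hM f).symm)⟩
end

section
/- Let C be a small category equipped with a Grothendieck pretopology J. Call a presheaf F : Cᵒᵖ ⥤ Type flabby if for every morphism f : U ⟶ V of C the restriction map F(f) : F(V) ⟶ F(U) is surjective, and call F a flabby sheaf if it is moreover a sheaf for the Grothendieck topology generated by J. Then every presheaf P : Cᵒᵖ ⥤ Type admits a morphism ρ : P ⟶ G with G a flabby sheaf such that every morphism from P to a flabby sheaf factors through ρ (the factorization is not required to be unique). -/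
universe u

open CategoryTheory CategoryTheory.Limits

/-- A presheaf is flabby if every restriction map is surjective. -/
def Flabby {C : Type u} [SmallCategory C] (F : Cᵒᵖ ⥤ Type u) : Prop :=
  ∀ ⦃U V : C⦄ (f : U ⟶ V), Function.Surjective (F.map f.op)

/-!
The flabby sheaf is built freely, by generators and relations. Formal sections are generated by
the sections of `P`, formal restrictions, formal preimages along restriction maps and formal
amalgamations over covering sieves, modulo the relations that make restriction functorial and
extend `P`, make the preimages and amalgamations what they claim to be, and separate sections that
agree on a covering sieve. Into a flabby sheaf `Q`, a formal section is evaluated by recursion,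
choosing preimages by flabbiness and amalgamations by the sheaf condition; every relation holds
in `Q`, so evaluation descends to the quotient. These choices are why the factorization is not
unique.
-/

variable {C : Type u} [SmallCategory C]

theorem Flabby.nonempty_of_not_compatible {Q : Cᵒᵖ ⥤ Type u} (hQ : Flabby Q) {U : C}
    {R : Presieve U} {x : Presieve.FamilyOfElements Q R} (hx : ¬ x.Compatible) :
    Nonempty (Q.obj (Opposite.op U)) := by
  by_contra hU
  refine hx fun _ _ _ _ _ f _ hf _ _ => ?_
  exact (hU ⟨Function.surjInv (hQ f) (x f hf)⟩).elim

variable (K : GrothendieckTopology C) (P : Cᵒᵖ ⥤ Type u)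

inductive FormalSection : C → Type u
  | of {U : C} (x : P.obj (Opposite.op U)) : FormalSection U
  | res {U V : C} (f : U ⟶ V) (t : FormalSection V) : FormalSection U
  | lift {U V : C} (f : U ⟶ V) (t : FormalSection U) : FormalSection V
  | glue {U : C} (S : Sieve U) (hS : S ∈ K U)
      (fam : ∀ ⦃V : C⦄ (f : V ⟶ U), S f → FormalSection V) : FormalSection U

namespace FormalSection

variable {K P}

inductive Rel : ∀ {U : C}, FormalSection K P U → FormalSection K P U → Prop
  | refl {U : C} (t : FormalSection K P U) : Rel t t
  | symm {U : C} {t t' : FormalSection K P U} : Rel t t' → Rel t' t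
  | trans {U : C} {t t' t'' : FormalSection K P U} : Rel t t' → Rel t' t'' → Rel t t''
  | res_congr {U V : C} (f : U ⟶ V) {t t' : FormalSection K P V} :
      Rel t t' → Rel (res f t) (res f t')
  | res_id {U : C} (t : FormalSection K P U) : Rel (res (𝟙 U) t) t
  | res_res {U V W : C} (f : U ⟶ V) (g : V ⟶ W) (t : FormalSection K P W) :
      Rel (res f (res g t)) (res (f ≫ g) t)
  | res_of {U V : C} (f : U ⟶ V) (x : P.obj (Opposite.op V)) :
      Rel (res f (of x)) (of (P.map f.op x))
  | res_lift {U V : C} (f : U ⟶ V) (t : FormalSection K P U) : Rel (res f (lift f t)) t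
  | res_glue {U : C} (S : Sieve U) (hS : S ∈ K U)
      (fam : ∀ ⦃V : C⦄ (f : V ⟶ U), S f → FormalSection K P V)
      (compat : ∀ ⦃Y₁ Y₂ Z : C⦄ (g₁ : Z ⟶ Y₁) (g₂ : Z ⟶ Y₂) (f₁ : Y₁ ⟶ U) (f₂ : Y₂ ⟶ U)
        (h₁ : S f₁) (h₂ : S f₂), g₁ ≫ f₁ = g₂ ≫ f₂ →
          Rel (res g₁ (fam f₁ h₁)) (res g₂ (fam f₂ h₂)))
      {V : C} (f : V ⟶ U) (hf : S f) : Rel (res f (glue S hS fam)) (fam f hf)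
  | sep {U : C} (S : Sieve U) (hS : S ∈ K U) {t t' : FormalSection K P U}
      (h : ∀ ⦃V : C⦄ (f : V ⟶ U), S f → Rel (res f t) (res f t')) : Rel t t'

instance setoid (U : C) : Setoid (FormalSection K P U) :=
  ⟨Rel, ⟨Rel.refl, Rel.symm, Rel.trans⟩⟩

end FormalSection

open FormalSection

def freeFlabbySheaf : Cᵒᵖ ⥤ Type u where
  obj U := Quotient (FormalSection.setoid (K := K) (P := P) U.unop)
  map f := TypeCat.ofHom <|
    Quotient.map (res f.unop) fun _ _ => Rel.res_congr f.unop
  map_id U := by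
    ext t
    induction t using Quotient.inductionOn with
    | _ t => exact Quotient.sound (Rel.res_id t)
  map_comp f g := by
    ext t
    induction t using Quotient.inductionOn with
    | _ t => exact Quotient.sound (Rel.res_res g.unop f.unop t).symm

def toFreeFlabbySheaf : P ⟶ freeFlabbySheaf K P where
  app U := TypeCat.ofHom fun x => ⟦of x⟧
  naturality U V f := by
    ext x
    exact Quotient.sound (Rel.res_of f.unop x).symm

variable {K P}

theorem freeFlabbySheaf_map_mk {U V : C} (f : U ⟶ V) (t : FormalSection K P V) :
    (freeFlabbySheaf K P).map f.op ⟦t⟧ = ⟦res f t⟧ :=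
  rfl

theorem flabby_freeFlabbySheaf : Flabby (freeFlabbySheaf K P) := by
  intro U V f s
  induction s using Quotient.inductionOn with
  | _ t => exact ⟨⟦lift f t⟧, Quotient.sound (Rel.res_lift f t)⟩

theorem freeFlabbySheaf_mk_eq_mk {U : C} {t t' : FormalSection K P U} :
    (⟦t⟧ : (freeFlabbySheaf K P).obj (Opposite.op U)) = ⟦t'⟧ ↔ Rel t t' :=
  Quotient.eq

theorem isSeparatedFor_freeFlabbySheaf {U : C} {S : Sieve U} (hS : S ∈ K U) :
    Presieve.IsSeparatedFor (freeFlabbySheaf K P) S.arrows := by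
  intro x s s' hs hs'
  induction s using Quotient.inductionOn with | _ t =>
  induction s' using Quotient.inductionOn with | _ t' =>
  refine Quotient.sound (Rel.sep S hS fun V f hf => freeFlabbySheaf_mk_eq_mk.1 ?_)
  rw [← freeFlabbySheaf_map_mk, ← freeFlabbySheaf_map_mk, hs f hf, hs' f hf]

theorem exists_isAmalgamation_freeFlabbySheaf {U : C} {S : Sieve U} (hS : S ∈ K U)
    (x : Presieve.FamilyOfElements (freeFlabbySheaf K P) S.arrows) (hx : x.Compatible) :
    ∃ s, x.IsAmalgamation s := by
  let fam : ∀ ⦃V : C⦄ (f : V ⟶ U), S f → FormalSection K P V := fun _ f hf => (x f hf).out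
  have hfam : ∀ ⦃V : C⦄ (f : V ⟶ U) (hf : S f), (⟦fam f hf⟧ : (freeFlabbySheaf K P).obj _) =
      x f hf := fun _ f hf => Quotient.out_eq _
  have compat ⦃Y₁ Y₂ Z : C⦄ (g₁ : Z ⟶ Y₁) (g₂ : Z ⟶ Y₂) (f₁ : Y₁ ⟶ U) (f₂ : Y₂ ⟶ U)
      (h₁ : S f₁) (h₂ : S f₂) (w : g₁ ≫ f₁ = g₂ ≫ f₂) :
      Rel (res g₁ (fam f₁ h₁)) (res g₂ (fam f₂ h₂)) := by
    refine freeFlabbySheaf_mk_eq_mk.1 ?_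
    rw [← freeFlabbySheaf_map_mk, ← freeFlabbySheaf_map_mk, hfam, hfam]
    exact hx g₁ g₂ h₁ h₂ w
  refine ⟨⟦glue S hS fam⟧, fun V f hf => ?_⟩
  rw [freeFlabbySheaf_map_mk, ← hfam f hf]
  exact Quotient.sound (Rel.res_glue S hS fam compat f hf)

theorem isSheaf_freeFlabbySheaf : Presieve.IsSheaf K (freeFlabbySheaf K P) :=
  fun _ _ hS => (isSeparatedFor_freeFlabbySheaf hS).isSheafFor
    (exists_isAmalgamation_freeFlabbySheaf hS)

section Desc

variable {Q : Cᵒᵖ ⥤ Type u} (hQ : Flabby Q) (hQs : Presieve.IsSheaf K Q) (φ : P ⟶ Q)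

namespace FormalSection

open Classical in
noncomputable def eval : ∀ {U : C}, FormalSection K P U → Q.obj (Opposite.op U)
  | _, of x => φ.app _ x
  | _, res f t => Q.map f.op (eval t)
  | _, lift f t => Function.surjInv (hQ f) (eval t)
  | _, glue S hS fam =>
      let x : Presieve.FamilyOfElements Q S.arrows := fun _ f hf => eval (fam f hf)
      if hx : x.Compatible then (hQs S hS).amalgamate x hx
      -- Only compatible families occur in `Rel.res_glue`, so this value is arbitrary.
      else (hQ.nonempty_of_not_compatible hx).some

theorem eval_eq_of_rel {U : C} {t t' : FormalSection K P U} (h : Rel t t') :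
    eval hQ hQs φ t = eval hQ hQs φ t' := by
  induction h with
  | refl => rfl
  | symm _ ih => exact ih.symm
  | trans _ _ ih ih' => exact ih.trans ih'
  | res_congr f _ ih => simp only [eval, ih]
  | res_id t => simp only [eval, op_id, Functor.map_id_apply]
  | res_res f g t => simp only [eval, op_comp, Functor.map_comp_apply]
  | res_of f x => simp only [eval, NatTrans.naturality_apply]
  | res_lift f t => simp only [eval, Function.surjInv_eq]
  | res_glue S hS fam compat f hf ih =>
    have hx : Presieve.FamilyOfElements.Compatible (P := Q) (R := S.arrows)
        fun _ f hf => eval hQ hQs φ (fam f hf) := fun _ _ _ g₁ g₂ f₁ f₂ h₁ h₂ w => by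
      simpa only [eval] using ih g₁ g₂ f₁ f₂ h₁ h₂ w
    simp only [eval, dif_pos hx]
    exact (hQs S hS).valid_glue hx f hf
  | sep S hS _ ih =>
    exact (hQs S hS).isSeparatedFor.ext fun _ f hf => by simpa only [eval] using ih f hf

end FormalSection

noncomputable def freeFlabbySheafDesc : freeFlabbySheaf K P ⟶ Q where
  app U := TypeCat.ofHom <| Quotient.lift (eval hQ hQs φ) fun _ _ => eval_eq_of_rel hQ hQs φ
  naturality U V f := by
    ext s
    induction s using Quotient.inductionOn with
    | _ t => rfl

theorem toFreeFlabbySheaf_comp_freeFlabbySheafDesc :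
    toFreeFlabbySheaf K P ≫ freeFlabbySheafDesc hQ hQs φ = φ :=
  rfl

end Desc

theorem flabby_sheaf_weak_reflection
    {C : Type u} [SmallCategory C] [HasPullbacks C]
    (J : Pretopology C) (P : Cᵒᵖ ⥤ Type u) :
    ∃ (G : Cᵒᵖ ⥤ Type u) (ρ : P ⟶ G),
      Flabby G ∧ Presieve.IsSheaf J.toGrothendieck G ∧
        ∀ (Q : Cᵒᵖ ⥤ Type u), Flabby Q → Presieve.IsSheaf J.toGrothendieck Q →
          ∀ f : P ⟶ Q, ∃ g : G ⟶ Q, ρ ≫ g = f :=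
  ⟨freeFlabbySheaf J.toGrothendieck P, toFreeFlabbySheaf _ P, flabby_freeFlabbySheaf,
    isSheaf_freeFlabbySheaf, fun _ hQ hQs φ => ⟨freeFlabbySheafDesc hQ hQs φ,
      toFreeFlabbySheaf_comp_freeFlabbySheafDesc hQ hQs φ⟩⟩
end
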